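/- Let G be a group with monoid presentation Mon⟨X ∪ X⁻¹ | R ∪ R₀⟩ (where R₀ consists of the free-reduction relations x x⁻¹ = 1 and x⁻¹ x = 1), and suppose G admits a complete rewriting system R̂ (presenting the same congruence) that satisfies condition C⁺. Then the monoid M = Mon⟨X | R̂⁺⟩ embeds into G via the natural map sending each generator x ∈ X to its image in G. -/

import Mathlib

open Relation

/-- One-step reduction of the string rewriting system `R`. -/
def RWStep {α : Type*} (R : Set (List α × List α)) (u v : List α) : Prop :=
  ∃ a l r b, (l, r) ∈ R ∧ u = a ++ l ++ b ∧ v = a ++ r ++ b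

/-- `R` is terminating: there is no infinite sequence of one-step reductions. -/
def RWTerminating {α : Type*} (R : Set (List α × List α)) : Prop :=
  ¬ ∃ f : ℕ → List α, ∀ n, RWStep R (f n) (f (n + 1))

/-- A word is irreducible if no one-step reduction applies to it. -/
def RWIrred {α : Type*} (R : Set (List α × List α)) (w : List α) : Prop :=
  ¬ ∃ z, RWStep R w z


/-- A word over `X ∪ X⁻¹` (modelled as `X ⊕ X`, left = positive letters) is positive
if all its letters are positive. -/
def RWPositive {X : Type*} (w : List (X ⊕ X)) : Prop :=
  ∀ c ∈ w, Sum.isLeft c = true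

/-- The subsystem of rules with positive left-hand side. -/
def RWPos {X : Type*} (R : Set (List (X ⊕ X) × List (X ⊕ X))) :
    Set (List (X ⊕ X) × List (X ⊕ X)) :=
  {p ∈ R | RWPositive p.1}

/-- The free-reduction rules `x x⁻¹ → 1`, `x⁻¹ x → 1`. -/
def RWFreeRed (X : Type*) : Set (List (X ⊕ X) × List (X ⊕ X)) :=
  {p | ∃ x : X, p = ([Sum.inl x, Sum.inr x], []) ∨ p = ([Sum.inr x, Sum.inl x], [])}

/-!
Two words equal in `G` are `R̂`-convertible, so by confluence they rewrite to a common word.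
By C⁺, every `R̂`-rewrite of a positive word uses a rule of `R̂⁺` and yields a positive word,
so for positive words both rewriting sequences already take place in `M`.
-/

theorem Relation.eqvGen_le_join_reflTransGen {α : Type*} {r : α → α → Prop}
    (hconf : ∀ a b c, ReflTransGen r a b → ReflTransGen r a c → Join (ReflTransGen r) b c) :
    EqvGen r ≤ Join (ReflTransGen r) :=
  have := (equivalence_join hconf).isEquiv
  EqvGen.eqvGen_le fun _ b hab => ⟨b, .single hab, .refl⟩

theorem RWStep.mono {α : Type*} {R S : Set (List α × List α)} (h : R ⊆ S) :
    RWStep R ≤ RWStep S :=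
  fun _ _ ⟨a, l, r, b, hmem, hu, hv⟩ => ⟨a, l, r, b, h hmem, hu, hv⟩

theorem rwPos_subset {X : Type*} (R : Set (List (X ⊕ X) × List (X ⊕ X))) : RWPos R ⊆ R :=
  fun _ hp => hp.1

section Positive

variable {X : Type*} {R : Set (List (X ⊕ X) × List (X ⊕ X))} {u v : List (X ⊕ X)}

theorem RWPositive.mono (hv : RWPositive v) (h : u ⊆ v) : RWPositive u :=
  fun c hc => hv c (h hc)

theorem RWPositive.append (hu : RWPositive u) (hv : RWPositive v) : RWPositive (u ++ v) := by
  intro c hc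
  rcases List.mem_append.1 hc with h | h
  exacts [hu c h, hv c h]

theorem RWPositive.rwStep (hC : ∀ p ∈ R, RWPositive p.1 → RWPositive p.2)
    (hu : RWPositive u) (hs : RWStep R u v) : RWStep (RWPos R) u v ∧ RWPositive v := by
  obtain ⟨a, l, r, b, hmem, rfl, rfl⟩ := hs
  have hl : RWPositive l := hu.mono (by simp)
  have hr : RWPositive r := hC (l, r) hmem hl
  refine ⟨⟨a, l, r, b, ⟨hmem, hl⟩, rfl, rfl⟩, ?_⟩
  exact ((hu.mono (by simp)).append hr).append (hu.mono (by simp))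

theorem RWPositive.reflTransGen_rwPos (hC : ∀ p ∈ R, RWPositive p.1 → RWPositive p.2)
    (hu : RWPositive u) (h : ReflTransGen (RWStep R) u v) :
    ReflTransGen (RWStep (RWPos R)) u v := by
  induction h using ReflTransGen.head_induction_on with
  | refl => exact .refl
  | head hstep _ ih =>
      obtain ⟨hstep', hpos⟩ := hu.rwStep hC hstep
      exact .head hstep' (ih hpos)

end Positive

theorem monoid_embeds_of_complete_Cplus_general {X : Type*}
    (R Rhat : Set (List (X ⊕ X) × List (X ⊕ X)))
    (hpres : ∀ u v : List (X ⊕ X),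
      Relation.EqvGen (RWStep Rhat) u v ↔ Relation.EqvGen (RWStep (R ∪ RWFreeRed X)) u v)
    (hConf : ∀ w u v : List (X ⊕ X), Relation.ReflTransGen (RWStep Rhat) w u →
      Relation.ReflTransGen (RWStep Rhat) w v →
      ∃ z, Relation.ReflTransGen (RWStep Rhat) u z ∧ Relation.ReflTransGen (RWStep Rhat) v z)
    (hCplus : ∀ p ∈ Rhat, RWPositive p.1 → RWPositive p.2) :
    ∀ u v : List (X ⊕ X), RWPositive u → RWPositive v →
      (Relation.EqvGen (RWStep (R ∪ RWFreeRed X)) u v ↔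
        Relation.EqvGen (RWStep (RWPos Rhat)) u v) := by
  intro u v hu hv
  constructor
  · intro h
    obtain ⟨z, huz, hvz⟩ := eqvGen_le_join_reflTransGen hConf u v ((hpres u v).2 h)
    have huz' := EqvGen.reflTransGen_le_eqvGen _ _ _ (hu.reflTransGen_rwPos hCplus huz)
    have hvz' := EqvGen.reflTransGen_le_eqvGen _ _ _ (hv.reflTransGen_rwPos hCplus hvz)
    exact .trans _ _ _ huz' (.symm _ _ hvz')
  · intro h
    exact (hpres u v).1 (EqvGen.mono (RWStep.mono (rwPos_subset Rhat)) u v h)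

/-- If the group `G = Mon⟨X ∪ X⁻¹ | R ∪ R₀⟩` admits a complete rewriting system `R̂`
presenting the same congruence and satisfying C⁺, then the monoid `M = Mon⟨X | R̂⁺⟩`
embeds into `G`: two positive words are equal in `G` iff they are equal in `M`. -/
theorem monoid_embeds_of_complete_Cplus {X : Type*} [Fintype X]
    (R Rhat : Set (List (X ⊕ X) × List (X ⊕ X)))
    (hpres : ∀ u v : List (X ⊕ X),
      Relation.EqvGen (RWStep Rhat) u v ↔ Relation.EqvGen (RWStep (R ∪ RWFreeRed X)) u v)
    (hT : RWTerminating Rhat)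
    (hConf : ∀ w u v : List (X ⊕ X), Relation.ReflTransGen (RWStep Rhat) w u →
      Relation.ReflTransGen (RWStep Rhat) w v →
      ∃ z, Relation.ReflTransGen (RWStep Rhat) u z ∧ Relation.ReflTransGen (RWStep Rhat) v z)
    (hCplus : ∀ p ∈ Rhat, RWPositive p.1 → RWPositive p.2) :
    ∀ u v : List (X ⊕ X), RWPositive u → RWPositive v →
      (Relation.EqvGen (RWStep (R ∪ RWFreeRed X)) u v ↔
        Relation.EqvGen (RWStep (RWPos Rhat)) u v) :=
  monoid_embeds_of_complete_Cplus_general R Rhat hpres hConf hCplus
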